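/- Base case computations: (a) For M₀, M₁ ∈ UC(ω) with fM₀ ≅ fM₁ ≅ M, every tail of M₀ + M₁·ℕ is isomorphic to M + M₁·ℕ; (b) for M₀ ∈ UC(ω) with fM₀ ≅ M, every tail of M₀·ℤ is isomorphic to M + M₀·ℕ. In particular M₀ + M₁·ℕ and M₀·ℤ are uniform chains (of rank ω+1) under these hypotheses. -/

import Mathlib

def inSS (s : List ℕ) : Prop :=
  s ≠ [] ∧ s.headI = 0 ∧ ∀ i, i < s.length → s.getD i 0 ≤ i

def sMinus (s : List ℕ) : List ℕ := s.dropLast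

def sPlus (s : List ℕ) : List ℕ := s.dropLast ++ [s.getLastD 0 + 1]

lemma sPlus_length (s : List ℕ) (h : s ≠ []) : (sPlus s).length = s.length := by
  simp [sPlus]
  exact Nat.succ_pred_eq_of_pos (List.length_pos_iff.mpr h)

lemma sPlus_last (s : List ℕ) : (sPlus s).getLastD 0 = s.getLastD 0 + 1 := by
  simp [sPlus, List.getLastD_concat]

def lf (s : List ℕ) : ℕ :=
  if h1 : s.length ≤ 1 then 1
  else if s.length - 1 ≤ s.getLastD 0 then lf (sMinus s)
  else lf (sPlus s) + lf (sMinus s)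
termination_by (s.length, s.length - s.getLastD 0)
decreasing_by
  all_goals first
    | exact Prod.Lex.left _ _ (by simp [sMinus]; omega)
    | (have h : s ≠ [] := by intro h; subst h; simp at h1
       refine Prod.Lex.right' _ ?_ ?_
       · rw [sPlus_length s h]
       · rw [sPlus_length s h, sPlus_last s]; omega)

def leavesSeq (s : List ℕ) (k : ℕ) : List ℕ :=
  if h1 : s.length ≤ 1 then [k]
  else if s.length - 1 ≤ s.getLastD 0 then leavesSeq (sMinus s) 0
  else leavesSeq (sPlus s) (k + 1) ++ leavesSeq (sMinus s) 0
termination_by (s.length, s.length - s.getLastD 0)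
decreasing_by
  all_goals first
    | exact Prod.Lex.left _ _ (by simp [sMinus]; omega)
    | (have h : s ≠ [] := by intro h; subst h; simp at h1
       refine Prod.Lex.right' _ ?_ ?_
       · rw [sPlus_length s h]
       · rw [sPlus_length s h, sPlus_last s]; omega)

def wt (s : List ℕ) (i : ℕ) : ℕ := (leavesSeq s 0).getD i 0

instance : Inhabited LinOrd.{0} := ⟨LinOrd.of PUnit⟩

/-- All tails (final segments) of `M` are isomorphic to all tails of `N`:
`fM ≅ fN` for uniform chains. -/
def TailsIso (M N : LinOrd.{0}) : Prop :=
  ∀ (x : M) (y : N), Nonempty ({z : M // x ≤ z} ≃o {z : N // y ≤ z})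

/-- A chain is uniform if all of its tails are pairwise order-isomorphic. -/
def IsUniform (M : LinOrd.{0}) : Prop := TailsIso M M

/-- Level-`n` component relation of the rank decomposition:
`compN C 0 = Eq`, and `compN C (n+1) x y` iff finitely many `compN C n`-classes
meet the interval `[x, y]`. -/
def compN (C : LinOrd.{0}) : ℕ → C → C → Prop
  | 0 => Eq
  | n + 1 => fun x y => ∃ F : Finset C, ∀ z, z ∈ Set.uIcc x y → ∃ w ∈ F, compN C n z w

/-- `M` has Hausdorff rank `ω`: any two points are equivalent at some finite level,
but no finite level identifies all points. -/
def HasRankOmega (M : LinOrd.{0}) : Prop :=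
  (∀ x y : M, ∃ n, compN M n x y) ∧ (∀ n, ∃ x y : M, ¬ compN M n x y)

/-- `UC(ω)`: uniform chains of rank `ω`. -/
def UCOmega (M : LinOrd.{0}) : Prop := IsUniform M ∧ HasRankOmega M

/-- The Pastjin chain constructor `A(s)[M₀,…,M_{lf(s)-1}]` (long version):
`A(⟨0⟩)[M₀] = M₀`; `A(s)[M] = A(s⁻)[M]·ℤ` if `s(n) = n`; otherwise
`A(s)[M] = A(s⁺)[M₀,…,M_{lf(s⁺)-1}] + A(s⁻)[M_{lf(s⁺)},…,M_{lf(s)-1}]·ℕ`. -/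
def build (s : List ℕ) (M : List LinOrd.{0}) : LinOrd.{0} :=
  if h1 : s.length ≤ 1 then M.headI
  else if s.length - 1 ≤ s.getLastD 0 then LinOrd.of (ℤ ×ₗ (build (sMinus s) M))
  else LinOrd.of ((build (sPlus s) (M.take (lf (sPlus s)))) ⊕ₗ
        (ℕ ×ₗ (build (sMinus s) (M.drop (lf (sPlus s))))))
termination_by (s.length, s.length - s.getLastD 0)
decreasing_by
  all_goals first
    | exact Prod.Lex.left _ _ (by simp [sMinus]; omega)
    | (have h : s ≠ [] := by intro h; subst h; simp at h1
       refine Prod.Lex.right' _ ?_ ?_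
       · rw [sPlus_length s h]
       · rw [sPlus_length s h, sPlus_last s]; omega)

/-- A tail of `M` (an arbitrary final segment, canonical up to isomorphism for
uniform chains). -/
noncomputable def fTail (M : LinOrd.{0}) : LinOrd.{0} :=
  haveI := Classical.dec (Nonempty M)
  if h : Nonempty M then LinOrd.of {y : M // h.some ≤ y} else M

/-- The tail array `f_s(M)`. -/
noncomputable def tailArr (s : List ℕ) (M : List LinOrd.{0}) : List LinOrd.{0} :=
  if h1 : s.length ≤ 1 then [fTail M.headI]
  else if s = [0, 0] then [fTail M.headI, M.getD 1 default]
  else if s = [0, 1] then [fTail M.headI, M.headI]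
  else if s.length - 1 ≤ s.getLastD 0 then tailArr (sMinus s) M ++ M
  else tailArr (sPlus s) (M.take (lf (sPlus s))) ++ M.drop (lf (sPlus s))
termination_by (s.length, s.length - s.getLastD 0)
decreasing_by
  all_goals first
    | exact Prod.Lex.left _ _ (by simp [sMinus]; omega)
    | (have h : s ≠ [] := by intro h; subst h; simp at h1
       refine Prod.Lex.right' _ ?_ ?_
       · rw [sPlus_length s h]
       · rw [sPlus_length s h, sPlus_last s]; omega)

/-- Componentwise isomorphism of arrays of chains. -/
def ArrIso (A B : List LinOrd.{0}) : Prop :=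
  A.length = B.length ∧
    ∀ i, i < A.length → Nonempty (↥(A.getD i default) ≃o ↥(B.getD i default))

/-! The tail of a point in `M₀ + M₁·ℕ` or `M₀·ℤ` splits as the tail of that point inside its
copy of `M₀` or `M₁`, followed by the copies lying strictly above it; those form an `ℕ`-indexed
sum again, so the tail is `fM + M₁·ℕ` (resp. `fM + M₀·ℕ`) whatever the point. -/

open Sum

namespace OrderIso

variable {ι α β : Type*} [LinearOrder ι] [LinearOrder α] [LinearOrder β]

noncomputable def tailSumLexInl (a : α) :
    {y : α ⊕ₗ β // toLex (inl a) ≤ y} ≃o {a' : α // a ≤ a'} ⊕ₗ β := by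
  refine (StrictMono.orderIsoOfSurjective
    (fun z => Sum.elim (fun a' => ⟨toLex (inl a'.1), Lex.inl_le_inl_iff.2 a'.2⟩)
      (fun b => ⟨toLex (inr b), Lex.inl_le_inr a b⟩) (ofLex z)) ?_ ?_).symm
  · rintro (⟨a₁, _⟩ | b₁) (⟨a₂, _⟩ | b₂) h
    · have h' := Lex.inl_lt_inl_iff.1 h
      exact Lex.inl_lt_inl_iff.2 h'
    · exact Lex.inl_lt_inr _ _
    · exact absurd h Lex.not_inr_lt_inl
    · exact Lex.inr_lt_inr_iff.2 (Lex.inr_lt_inr_iff.1 h)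
  · rintro ⟨a' | b, h⟩
    · exact ⟨toLex (inl ⟨a', Lex.inl_le_inl_iff.1 h⟩), rfl⟩
    · exact ⟨toLex (inr b), rfl⟩

noncomputable def tailSumLexInr (b : β) :
    {y : α ⊕ₗ β // toLex (inr b) ≤ y} ≃o {b' : β // b ≤ b'} := by
  refine (StrictMono.orderIsoOfSurjective
    (fun b' => ⟨toLex (inr b'.1), Lex.inr_le_inr_iff.2 b'.2⟩) ?_ ?_).symm
  · exact fun _ _ h => Lex.inr_lt_inr_iff.2 h
  · rintro ⟨a' | b', h⟩
    · exact absurd h Lex.not_inr_le_inl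
    · exact ⟨⟨b', Lex.inr_le_inr_iff.1 h⟩, rfl⟩

noncomputable def tailProdLex (i : ι) (b : β) :
    {y : ι ×ₗ β // toLex (i, b) ≤ y} ≃o {b' : β // b ≤ b'} ⊕ₗ ({j : ι // i < j} ×ₗ β) := by
  refine (StrictMono.orderIsoOfSurjective
    (fun z => Sum.elim (fun b' => ⟨toLex (i, b'.1), Prod.Lex.toLex_le_toLex.2 (.inr ⟨rfl, b'.2⟩)⟩)
      (fun p => ⟨toLex ((ofLex p).1.1, (ofLex p).2),
        Prod.Lex.toLex_le_toLex.2 (.inl (ofLex p).1.2)⟩) (ofLex z)) ?_ ?_).symm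
  · rintro (⟨b₁, _⟩ | ⟨⟨j₁, hj₁⟩, c₁⟩) (⟨b₂, _⟩ | ⟨⟨j₂, hj₂⟩, c₂⟩) h
    · have h' := Lex.inl_lt_inl_iff.1 h
      exact Prod.Lex.toLex_lt_toLex.2 (.inr ⟨rfl, h'⟩)
    · exact Prod.Lex.toLex_lt_toLex.2 (.inl hj₂)
    · exact absurd h Lex.not_inr_lt_inl
    · have h' := Prod.Lex.toLex_lt_toLex.1 (Lex.inr_lt_inr_iff.1 h)
      exact Prod.Lex.toLex_lt_toLex.2 (h'.imp id (And.imp (congrArg Subtype.val) id))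
  · rintro ⟨⟨j, c⟩, h⟩
    rcases Prod.Lex.toLex_le_toLex.1 h with hij | ⟨rfl, hbc⟩
    · exact ⟨toLex (inr (toLex (⟨j, hij⟩, c))), rfl⟩
    · exact ⟨toLex (inl ⟨c, hbc⟩), rfl⟩

noncomputable def natIoi (n : ℕ) : {j : ℕ // n < j} ≃o ℕ :=
  (StrictMono.orderIsoOfSurjective (fun m : ℕ => (⟨n + 1 + m, by omega⟩ : {j : ℕ // n < j}))
    (fun _ _ h => Subtype.mk_lt_mk.2 (by omega))
    (fun ⟨j, hj⟩ => ⟨j - n - 1, Subtype.ext (by dsimp only; omega)⟩)).symm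

noncomputable def intIoi (n : ℤ) : {j : ℤ // n < j} ≃o ℕ :=
  (StrictMono.orderIsoOfSurjective (fun m : ℕ => (⟨n + 1 + m, by omega⟩ : {j : ℤ // n < j}))
    (fun _ _ h => Subtype.mk_lt_mk.2 (by omega))
    (fun ⟨j, hj⟩ => ⟨(j - n - 1).toNat, Subtype.ext (by dsimp only; omega)⟩)).symm

noncomputable def tailNatLex (n : ℕ) (b : β) :
    {y : ℕ ×ₗ β // toLex (n, b) ≤ y} ≃o {b' : β // b ≤ b'} ⊕ₗ (ℕ ×ₗ β) :=
  (tailProdLex n b).trans (sumLexCongr (refl _) (Prod.Lex.prodLexCongr (natIoi n) (refl _)))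

noncomputable def tailIntLex (n : ℤ) (b : β) :
    {y : ℤ ×ₗ β // toLex (n, b) ≤ y} ≃o {b' : β // b ≤ b'} ⊕ₗ (ℕ ×ₗ β) :=
  (tailProdLex n b).trans (sumLexCongr (refl _) (Prod.Lex.prodLexCongr (intIoi n) (refl _)))

end OrderIso

section Tails

variable {α β γ : Type*} [LinearOrder α] [LinearOrder β] [LE γ]

theorem nonempty_tail_sumLex_natLex_orderIso
    (hα : ∀ a : α, Nonempty ({a' // a ≤ a'} ≃o γ)) (hβ : ∀ b : β, Nonempty ({b' // b ≤ b'} ≃o γ))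
    (x : α ⊕ₗ (ℕ ×ₗ β)) : Nonempty ({y // x ≤ y} ≃o γ ⊕ₗ (ℕ ×ₗ β)) := by
  rcases x with a | ⟨n, b⟩
  · exact ⟨(OrderIso.tailSumLexInl a).trans ((hα a).some.sumLexCongr (.refl _))⟩
  · exact ⟨((OrderIso.tailSumLexInr (toLex (n, b))).trans (OrderIso.tailNatLex n b)).trans
      ((hβ b).some.sumLexCongr (.refl _))⟩

theorem nonempty_tail_intLex_orderIso (hβ : ∀ b : β, Nonempty ({b' // b ≤ b'} ≃o γ))
    (x : ℤ ×ₗ β) : Nonempty ({y // x ≤ y} ≃o γ ⊕ₗ (ℕ ×ₗ β)) := by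
  rcases x with ⟨n, b⟩
  exact ⟨(OrderIso.tailIntLex n b).trans ((hβ b).some.sumLexCongr (.refl _))⟩

end Tails

theorem isUniform_of_forall_tail_orderIso {C : LinOrd.{0}} {γ : Type*} [LE γ]
    (h : ∀ x : C, Nonempty ({y // x ≤ y} ≃o γ)) : IsUniform C := fun x y =>
  let ⟨e⟩ := h x
  let ⟨f⟩ := h y
  ⟨e.trans f.symm⟩

/-- base case computations:
(a) for `M₀, M₁ ∈ UC(ω)` with all tails `fM₀ ≅ fM₁ ≅ M`, every tail of `M₀ + M₁·ℕ` is
isomorphic to `M + M₁·ℕ`, and `M₀ + M₁·ℕ` is uniform;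
(b) for `M₀ ∈ UC(ω)` with `fM₀ ≅ M`, every tail of `M₀·ℤ` is isomorphic to
`M + M₀·ℕ`, and `M₀·ℤ` is uniform. -/
theorem base_case_tails :
    (∀ M₀ M₁ M : LinOrd.{0}, UCOmega M₀ → UCOmega M₁ →
      (∀ x : M₀, Nonempty ({y : M₀ // x ≤ y} ≃o M)) →
      (∀ x : M₁, Nonempty ({y : M₁ // x ≤ y} ≃o M)) →
      (∀ x : ↥M₀ ⊕ₗ (ℕ ×ₗ ↥M₁),
        Nonempty ({y : ↥M₀ ⊕ₗ (ℕ ×ₗ ↥M₁) // x ≤ y} ≃o (↥M ⊕ₗ (ℕ ×ₗ ↥M₁)))) ∧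
      IsUniform (LinOrd.of (↥M₀ ⊕ₗ (ℕ ×ₗ ↥M₁)))) ∧
    (∀ M₀ M : LinOrd.{0}, UCOmega M₀ →
      (∀ x : M₀, Nonempty ({y : M₀ // x ≤ y} ≃o M)) →
      (∀ x : ℤ ×ₗ ↥M₀,
        Nonempty ({y : ℤ ×ₗ ↥M₀ // x ≤ y} ≃o (↥M ⊕ₗ (ℕ ×ₗ ↥M₀)))) ∧
      IsUniform (LinOrd.of (ℤ ×ₗ ↥M₀))) := by
  refine ⟨fun M₀ M₁ M _ _ h₀ h₁ => ?_, fun M₀ M _ h₀ => ?_⟩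
  · have tails := nonempty_tail_sumLex_natLex_orderIso h₀ h₁
    exact ⟨tails, isUniform_of_forall_tail_orderIso tails⟩
  · have tails := nonempty_tail_intLex_orderIso h₀
    exact ⟨tails, isUniform_of_forall_tail_orderIso tails⟩
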